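/- For all w > 0 and φ ∈ (0, π): (φ/(2π))·F₂(w²) + (π-φ)/(2π) + (1/π)·∫_0^{π/2} F₂(w²/cos²θ) dθ = (φ/(2π))·F₂(w²) + (π-φ)/(2π) + (1/2)·F₁(w²), i.e., (1/π)·∫_0^{π/2} F₂(w²/cos²θ) dθ = (1/2)·F₁(w²); equivalently ∫_0^{π/2} (1 - e^{-w²/(2cos²θ)}) dθ = π(Φ(w) - 1/2). -/

import Mathlib

open MeasureTheory ProbabilityTheory Real

/-- The cdf of the chi-squared distribution with 2 degrees of freedom: `F₂(t) = 1 - e^{-t/2}`. -/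
noncomputable def chi2cdf (t : ℝ) : ℝ := 1 - Real.exp (-(t / 2))

/-- The standard normal cdf `Φ`. -/
noncomputable def stdNormalCDF (x : ℝ) : ℝ := ((gaussianReal 0 1) (Set.Iic x)).toReal

/-- The cdf of the chi-squared distribution with 1 degree of freedom: `F₁(t) = 2Φ(√t) - 1`. -/
noncomputable def chi1cdf (t : ℝ) : ℝ := 2 * stdNormalCDF (Real.sqrt t) - 1

/-!
The identity is Craig's formula `∫_0^{π/2} exp(-b²/(2cos²θ)) dθ = π(1 - Φ(b))` for `b ≥ 0`.
Both sides equal `π/2` at `b = 0`, and both have derivative `-π φ(b)`, where `φ` is the standard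
normal density: differentiate under the integral sign and substitute `t = b tan θ`; since
`b²/cos²θ = b² + t²`, the integrand becomes `2π φ(b) φ(t)`, and `∫_0^∞ φ = 1/2`.
-/

open Set

lemma gaussianPDFReal_zero_one (x : ℝ) :
    gaussianPDFReal 0 1 x = (√(2 * π))⁻¹ * exp (-(x ^ 2 / 2)) := by
  simp [gaussianPDFReal, neg_div]

lemma gaussianPDFReal_zero_one_mul (x y : ℝ) :
    gaussianPDFReal 0 1 x * gaussianPDFReal 0 1 y = exp (-((x ^ 2 + y ^ 2) / 2)) / (2 * π) := by
  rw [gaussianPDFReal_zero_one, gaussianPDFReal_zero_one, mul_mul_mul_comm, ← exp_add, ← mul_inv,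
    mul_self_sqrt (by positivity)]
  ring_nf

lemma integral_Ioi_gaussianPDFReal_zero_one :
    ∫ x in Ioi (0 : ℝ), gaussianPDFReal 0 1 x = 1 / 2 := by
  simp_rw [gaussianPDFReal_zero_one, integral_const_mul,
    show ∀ x : ℝ, -(x ^ 2 / 2) = -(1 / 2) * x ^ 2 by intro x; ring, integral_gaussian_Ioi]
  rw [show π / (1 / 2) = 2 * π by ring]
  field_simp

lemma measureReal_gaussianReal_eq_integral (μ : ℝ) {v : NNReal} (hv : v ≠ 0) (s : Set ℝ) :
    (gaussianReal μ v).real s = ∫ x in s, gaussianPDFReal μ v x := by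
  rw [measureReal_def, gaussianReal_apply_eq_integral μ hv, ENNReal.toReal_ofReal
    (setIntegral_nonneg_of_ae (ae_of_all _ fun _ => gaussianPDFReal_nonneg μ v _))]

lemma stdNormalCDF_zero : stdNormalCDF 0 = 1 / 2 := by
  rw [stdNormalCDF, ← compl_Ioi, prob_compl_eq_one_sub measurableSet_Ioi,
    ENNReal.toReal_sub_of_le prob_le_one ENNReal.one_ne_top, ← measureReal_def,
    measureReal_gaussianReal_eq_integral 0 one_ne_zero, integral_Ioi_gaussianPDFReal_zero_one]
  norm_num

lemma stdNormalCDF_sub_stdNormalCDF (a b : ℝ) :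
    stdNormalCDF b - stdNormalCDF a = ∫ x in a..b, gaussianPDFReal 0 1 x := by
  have hint := integrable_gaussianPDFReal 0 1
  simp only [stdNormalCDF, ← measureReal_def, measureReal_gaussianReal_eq_integral 0 one_ne_zero]
  exact intervalIntegral.integral_Iic_sub_Iic hint.integrableOn hint.integrableOn

lemma image_Ioo_mul_tan {a : ℝ} (ha : 0 < a) :
    (fun θ => a * tan θ) '' Ioo 0 (π / 2) = Ioi 0 := by
  ext t
  constructor
  · rintro ⟨θ, hθ, rfl⟩
    exact mul_pos ha (tan_pos_of_pos_of_lt_pi_div_two hθ.1 hθ.2)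
  · intro ht
    refine ⟨arctan (t / a), ⟨?_, arctan_lt_pi_div_two _⟩, ?_⟩
    · simpa [arctan_zero] using arctan_strictMono (div_pos (mem_Ioi.1 ht) ha)
    · simp only [tan_arctan]
      field_simp

lemma integral_comp_mul_tan {a : ℝ} (ha : 0 < a) (g : ℝ → ℝ) :
    ∫ θ in Ioo 0 (π / 2), a / cos θ ^ 2 * g (a * tan θ) = ∫ t in Ioi 0, g t := by
  have hcos : ∀ θ ∈ Ioo 0 (π / 2), 0 < cos θ := fun θ hθ =>
    cos_pos_of_mem_Ioo ⟨by linarith [hθ.1, pi_pos], hθ.2⟩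
  rw [← image_Ioo_mul_tan ha, integral_image_eq_integral_abs_deriv_smul measurableSet_Ioo
    (f' := fun θ => a / cos θ ^ 2)]
  · refine setIntegral_congr_fun measurableSet_Ioo fun θ hθ => ?_
    rw [smul_eq_mul, abs_of_pos (div_pos ha (pow_pos (hcos θ hθ) 2))]
  · intro θ hθ
    simpa [div_eq_mul_inv] using ((hasDerivAt_tan (hcos θ hθ).ne').const_mul a).hasDerivWithinAt
  · intro x hx y hy h
    exact injOn_tan ⟨by linarith [hx.1, pi_pos], hx.2⟩ ⟨by linarith [hy.1, pi_pos], hy.2⟩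
      (mul_left_cancel₀ ha.ne' h)

lemma integral_div_cos_sq_mul_exp {a : ℝ} (ha : 0 < a) :
    ∫ θ in (0 : ℝ)..(π / 2), a / cos θ ^ 2 * exp (-(a ^ 2 / (2 * cos θ ^ 2)))
      = π * gaussianPDFReal 0 1 a := by
  have hexp : ∀ θ ∈ Ioo 0 (π / 2), exp (-(a ^ 2 / (2 * cos θ ^ 2)))
      = 2 * π * gaussianPDFReal 0 1 a * gaussianPDFReal 0 1 (a * tan θ) := by
    intro θ hθ
    have hc : cos θ ≠ 0 := (cos_pos_of_mem_Ioo ⟨by linarith [hθ.1, pi_pos], hθ.2⟩).ne'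
    have hsum : a ^ 2 + (a * tan θ) ^ 2 = a ^ 2 / cos θ ^ 2 := by
      rw [tan_eq_sin_div_cos]
      field_simp
      exact cos_sq_add_sin_sq θ
    rw [mul_assoc, gaussianPDFReal_zero_one_mul, hsum]
    field_simp
  rw [intervalIntegral.integral_of_le (by positivity), integral_Ioc_eq_integral_Ioo,
    setIntegral_congr_fun measurableSet_Ioo fun θ hθ => by rw [hexp θ hθ]]
  simp_rw [mul_left_comm _ (2 * π * gaussianPDFReal 0 1 a)]
  rw [integral_const_mul, integral_comp_mul_tan ha (gaussianPDFReal 0 1),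
    integral_Ioi_gaussianPDFReal_zero_one]
  ring

lemma hasDerivAt_exp_neg_sq_div (c b : ℝ) :
    HasDerivAt (fun b => exp (-(b ^ 2 / (2 * c)))) (-(b / c) * exp (-(b ^ 2 / (2 * c)))) b := by
  rcases eq_or_ne c 0 with rfl | hc
  · -- division by zero makes the function constant `1` and the claimed derivative `0`
    simpa using hasDerivAt_const b (1 : ℝ)
  · have h : HasDerivAt (fun b => -(b ^ 2 / (2 * c))) (-(2 * b / (2 * c))) b := by
      simpa using ((hasDerivAt_pow 2 b).div_const (2 * c)).fun_neg
    convert h.exp using 1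
    field_simp

lemma div_mul_exp_neg_sq_div_le {b : ℝ} (hb : 0 < b) (c : ℝ) :
    b / c * exp (-(b ^ 2 / (2 * c))) ≤ 2 / b := by
  have key := (mul_exp_neg_le_exp_neg_one (b ^ 2 / (2 * c))).trans (exp_le_one_iff.2 (by norm_num))
  calc b / c * exp (-(b ^ 2 / (2 * c)))
      = 2 / b * (b ^ 2 / (2 * c) * exp (-(b ^ 2 / (2 * c)))) := by field_simp
    _ ≤ 2 / b := mul_le_of_le_one_right (by positivity) key

lemma measurable_exp_neg_sq_div_cos_sq (b : ℝ) :
    Measurable fun θ => exp (-(b ^ 2 / (2 * cos θ ^ 2))) := by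
  fun_prop

lemma norm_exp_neg_sq_div_cos_sq_le_one (b θ : ℝ) : ‖exp (-(b ^ 2 / (2 * cos θ ^ 2)))‖ ≤ 1 := by
  rw [norm_of_nonneg (exp_pos _).le, exp_le_one_iff, neg_nonpos]
  positivity

lemma intervalIntegrable_exp_neg_sq_div_cos_sq (b s t : ℝ) :
    IntervalIntegrable (fun θ => exp (-(b ^ 2 / (2 * cos θ ^ 2)))) volume s t :=
  intervalIntegrable_const.mono_fun' (measurable_exp_neg_sq_div_cos_sq b).aestronglyMeasurable
    (ae_of_all _ (norm_exp_neg_sq_div_cos_sq_le_one b))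

noncomputable def craigIntegral (b : ℝ) : ℝ :=
  ∫ θ in (0 : ℝ)..(π / 2), exp (-(b ^ 2 / (2 * cos θ ^ 2)))

lemma craigIntegral_zero : craigIntegral 0 = π / 2 := by
  simp [craigIntegral]

lemma continuous_craigIntegral : Continuous craigIntegral :=
  intervalIntegral.continuous_of_dominated_interval
    (fun b => (measurable_exp_neg_sq_div_cos_sq b).aestronglyMeasurable)
    (fun b => ae_of_all _ fun θ _ => norm_exp_neg_sq_div_cos_sq_le_one b θ) intervalIntegrable_const
    (ae_of_all _ fun θ _ => by fun_prop)

lemma hasDerivAt_craigIntegral {a : ℝ} (ha : 0 < a) :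
    HasDerivAt craigIntegral (-(π * gaussianPDFReal 0 1 a)) a := by
  have hbound : ∀ θ, ∀ b ∈ Metric.ball a (a / 2),
      ‖-(b / cos θ ^ 2) * exp (-(b ^ 2 / (2 * cos θ ^ 2)))‖ ≤ 4 / a := fun θ b hb => by
    have hb : a / 2 < b := by linarith [(abs_lt.1 (Metric.mem_ball.1 hb)).1]
    have hb₀ : 0 < b := by linarith
    rw [norm_mul, norm_neg, ← norm_mul, norm_of_nonneg (by positivity)]
    refine (div_mul_exp_neg_sq_div_le hb₀ _).trans ?_
    rw [div_le_div_iff₀ hb₀ ha]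
    linarith
  have hderiv := intervalIntegral.hasDerivAt_integral_of_dominated_loc_of_deriv_le
    (F' := fun b θ => -(b / cos θ ^ 2) * exp (-(b ^ 2 / (2 * cos θ ^ 2))))
    (Metric.ball_mem_nhds a (half_pos ha))
    (.of_forall fun b => (measurable_exp_neg_sq_div_cos_sq b).aestronglyMeasurable)
    (intervalIntegrable_exp_neg_sq_div_cos_sq a 0 (π / 2)) (by fun_prop)
    (ae_of_all _ fun θ _ => hbound θ) intervalIntegrable_const
    (ae_of_all _ fun θ _ b _ => hasDerivAt_exp_neg_sq_div (cos θ ^ 2) b)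
  simp only [neg_mul, intervalIntegral.integral_neg, integral_div_cos_sq_mul_exp ha] at hderiv
  exact hderiv.2

theorem craigIntegral_eq_pi_mul_one_sub_stdNormalCDF {w : ℝ} (hw : 0 ≤ w) :
    craigIntegral w = π * (1 - stdNormalCDF w) := by
  have hftc := intervalIntegral.integral_eq_sub_of_hasDerivAt_of_le hw
    continuous_craigIntegral.continuousOn (fun x hx => hasDerivAt_craigIntegral hx.1)
    ((integrable_gaussianPDFReal 0 1).intervalIntegrable.const_mul π).neg
  rw [intervalIntegral.integral_neg, intervalIntegral.integral_const_mul,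
    ← stdNormalCDF_sub_stdNormalCDF, stdNormalCDF_zero, craigIntegral_zero] at hftc
  linarith

/-- For all `w > 0` and `φ ∈ (0, π)`:
`(φ/(2π))·F₂(w²) + (π-φ)/(2π) + (1/π)·∫_0^{π/2} F₂(w²/cos²θ) dθ
 = (φ/(2π))·F₂(w²) + (π-φ)/(2π) + (1/2)·F₁(w²)`, i.e.
`(1/π)·∫_0^{π/2} F₂(w²/cos²θ) dθ = (1/2)·F₁(w²)`; equivalently
`∫_0^{π/2} (1 - e^{-w²/(2cos²θ)}) dθ = π(Φ(w) - 1/2)`. -/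
theorem one_sided_methods_agree (w : ℝ) (hw : 0 < w) :
    (∀ φ ∈ Set.Ioo (0 : ℝ) π,
      (φ / (2 * π)) * chi2cdf (w ^ 2) + (π - φ) / (2 * π) +
          (1 / π) * ∫ θ in (0 : ℝ)..(π / 2), chi2cdf (w ^ 2 / Real.cos θ ^ 2) =
        (φ / (2 * π)) * chi2cdf (w ^ 2) + (π - φ) / (2 * π) + (1 / 2) * chi1cdf (w ^ 2)) ∧
    (1 / π) * (∫ θ in (0 : ℝ)..(π / 2), chi2cdf (w ^ 2 / Real.cos θ ^ 2)) =
      (1 / 2) * chi1cdf (w ^ 2) ∧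
    (∫ θ in (0 : ℝ)..(π / 2), (1 - Real.exp (-(w ^ 2 / (2 * Real.cos θ ^ 2))))) =
      π * (stdNormalCDF w - 1 / 2) := by
  have hcraig : ∫ θ in (0 : ℝ)..(π / 2), (1 - exp (-(w ^ 2 / (2 * cos θ ^ 2))))
      = π * (stdNormalCDF w - 1 / 2) := by
    rw [intervalIntegral.integral_sub intervalIntegrable_const
      (intervalIntegrable_exp_neg_sq_div_cos_sq w _ _), ← craigIntegral,
      craigIntegral_eq_pi_mul_one_sub_stdNormalCDF hw.le, intervalIntegral.integral_const]
    simp only [sub_zero, smul_eq_mul, mul_one]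
    ring
  have hchi2 : ∀ θ, chi2cdf (w ^ 2 / cos θ ^ 2) = 1 - exp (-(w ^ 2 / (2 * cos θ ^ 2))) :=
    fun θ => by rw [chi2cdf, div_div, mul_comm (cos θ ^ 2)]
  have hchi1 : chi1cdf (w ^ 2) = 2 * stdNormalCDF w - 1 := by
    rw [chi1cdf, sqrt_sq hw.le]
  have hF₂F₁ : (1 / π) * ∫ θ in (0 : ℝ)..(π / 2), chi2cdf (w ^ 2 / cos θ ^ 2)
      = (1 / 2) * chi1cdf (w ^ 2) := by
    simp_rw [hchi2, hcraig, hchi1]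
    field_simp
  exact ⟨fun φ _ => by rw [hF₂F₁], hF₂F₁, hcraig⟩
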